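/- For all natural numbers x ≠ y and every real s, the incomplete Gaussian inner product of Hermite polynomials has the closed form: (x − y) · ∫_s^∞ e^{−t²/2}·He_x(t)·He_y(t) dt = e^{−s²/2} · ( x·He_{x−1}(s)·He_y(s) − y·He_x(s)·He_{y−1}(s) ), where the terms with index −1 are interpreted as 0. Consequently, for x ≠ y the discrete Hermite kernel equals K_s(x,y) = (2π·x!·y!)^{−1/2}·e^{−s²/2}·( x·He_{x−1}(s)·He_y(s) − y·He_x(s)·He_{y−1}(s) )/(x − y). -/

import Mathlib

/-!
The weighted Wronskian `W(t) = e^{-t²/2} (He_x' He_y - He_x He_y')(t)` satisfies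
`W' = (y - x) e^{-t²/2} He_x He_y`, because `(e^{-t²/2} He_n')' = -n e^{-t²/2} He_n` is the
Sturm–Liouville form of the Hermite equation `He_n'' = t He_n' - n He_n`. Since `W` decays at
`+∞`, integrating over `(s, ∞)` gives `(x - y) ∫_s^∞ e^{-t²/2} He_x He_y = W(s)`, and
`He_n' = n He_{n-1}` turns `W(s)` into the stated boundary term.
-/

open scoped Nat

noncomputable section

/-- The discrete Hermite kernel with parameter `s ∈ ℝ`:
`K_s(x,y) = (2π·x!·y!)^{−1/2} ∫_s^∞ e^{−t²/2}·He_x(t)·He_y(t) dt` for `x, y ∈ ℕ`,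
where `He_n` is the probabilists' Hermite polynomial. -/
def discreteHermiteKernel (s : ℝ) (x y : ℕ) : ℝ :=
  (Real.sqrt (2 * Real.pi * (x ! : ℝ) * (y ! : ℝ)))⁻¹ *
    ∫ t in Set.Ioi s, Real.exp (-t ^ 2 / 2) * Polynomial.aeval t (Polynomial.hermite x) *
      Polynomial.aeval t (Polynomial.hermite y)

open Polynomial MeasureTheory Filter Topology

namespace Polynomial

theorem derivative_hermite_succ (n : ℕ) :
    derivative (hermite (n + 1)) = ((n + 1 : ℕ) : ℤ[X]) * hermite n := by
  induction n with
  | zero => simp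
  | succ n ih =>
    have h := hermite_succ n
    rw [hermite_succ (n + 1), derivative_sub, derivative_mul, derivative_X, ih, derivative_mul,
      derivative_natCast]
    push_cast
    linear_combination (-(n : ℤ[X]) - 1) * h

theorem derivative_hermite (n : ℕ) :
    derivative (hermite n) = (n : ℤ[X]) * hermite (n - 1) := by
  cases n with
  | zero => simp
  | succ n => rw [derivative_hermite_succ, Nat.add_sub_cancel]

theorem derivative_derivative_hermite (n : ℕ) :
    derivative (derivative (hermite n)) =
      X * derivative (hermite n) - (n : ℤ[X]) * hermite n := by
  have h := congrArg derivative (hermite_succ n)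
  rw [derivative_hermite_succ, derivative_sub, derivative_mul, derivative_X] at h
  push_cast at h
  linear_combination h

section GaussianWeight

variable {R : Type*} [CommSemiring R] [Algebra R ℝ]

theorem integrable_aeval_mul_exp_neg_mul_sq (p : R[X]) {b : ℝ} (hb : 0 < b) :
    Integrable fun t : ℝ => aeval t p * Real.exp (-b * t ^ 2) := by
  induction p using Polynomial.induction_on' with
  | add p q hp hq => simpa only [map_add, add_mul, Pi.add_def] using hp.add hq
  | monomial n c =>
    have h := (integrable_rpow_mul_exp_neg_mul_sq hb (s := n)
      (neg_one_lt_zero.trans_le n.cast_nonneg)).const_mul (algebraMap R ℝ c)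
    simpa only [aeval_monomial, Real.rpow_natCast, mul_assoc] using h

theorem tendsto_aeval_mul_exp_neg_mul_sq (p : R[X]) {b : ℝ} (hb : 0 < b) :
    Tendsto (fun t : ℝ => aeval t p * Real.exp (-b * t ^ 2)) atTop (𝓝 0) := by
  induction p using Polynomial.induction_on' with
  | add p q hp hq => simpa only [map_add, add_mul, add_zero] using hp.add hq
  | monomial n c =>
    have hexp : Tendsto (fun t : ℝ => Real.exp (-(1 / 2) * t)) atTop (𝓝 0) :=
      Real.tendsto_exp_atBot.comp (tendsto_id.const_mul_atTop_of_neg (by norm_num))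
    have h := ((rpow_mul_exp_neg_mul_sq_isLittleO_exp_neg hb n).trans_tendsto hexp).const_mul
      (algebraMap R ℝ c)
    simpa only [aeval_monomial, Real.rpow_natCast, mul_assoc, mul_zero] using h

end GaussianWeight

theorem hasDerivAt_exp_neg_sq_div_two_mul_aeval_derivative_hermite (n : ℕ) (t : ℝ) :
    HasDerivAt (fun u : ℝ => Real.exp (-u ^ 2 / 2) * aeval u (derivative (hermite n)))
      (-n * (Real.exp (-t ^ 2 / 2) * aeval t (hermite n))) t := by
  have hexp : HasDerivAt (fun u : ℝ => Real.exp (-u ^ 2 / 2)) (-t * Real.exp (-t ^ 2 / 2)) t :=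
    ((hasDerivAt_pow 2 t).fun_neg.div_const 2).exp.congr_deriv (by ring)
  refine (hexp.fun_mul ((derivative (hermite n)).hasDerivAt_aeval t)).congr_deriv ?_
  rw [derivative_derivative_hermite]
  simp only [map_sub, map_mul, aeval_X, map_natCast]
  ring

theorem hasDerivAt_exp_neg_sq_div_two_mul_wronskian_hermite (m n : ℕ) (t : ℝ) :
    HasDerivAt (fun u : ℝ => Real.exp (-u ^ 2 / 2) *
        (aeval u (derivative (hermite m)) * aeval u (hermite n)
          - aeval u (hermite m) * aeval u (derivative (hermite n))))
      ((n - m : ℝ) * (Real.exp (-t ^ 2 / 2) * aeval t (hermite m) * aeval t (hermite n))) t := by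
  have h := ((hasDerivAt_exp_neg_sq_div_two_mul_aeval_derivative_hermite m t).fun_mul
    ((hermite n).hasDerivAt_aeval t)).fun_sub
      (((hermite m).hasDerivAt_aeval t).fun_mul
        (hasDerivAt_exp_neg_sq_div_two_mul_aeval_derivative_hermite n t))
  exact (h.congr_deriv (by ring)).congr_of_eventuallyEq (.of_forall fun u => by ring)

end Polynomial

theorem sub_mul_integral_Ioi_exp_neg_sq_div_two_mul_hermite_mul_hermite (m n : ℕ) (s : ℝ) :
    ((m : ℝ) - n) * ∫ t in Set.Ioi s, Real.exp (-t ^ 2 / 2) * aeval t (hermite m) *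
        aeval t (hermite n)
      = Real.exp (-s ^ 2 / 2) * (m * aeval s (hermite (m - 1)) * aeval s (hermite n)
          - n * aeval s (hermite m) * aeval s (hermite (n - 1))) := by
  have hweight : ∀ t : ℝ, Real.exp (-t ^ 2 / 2) = Real.exp (-(1 / 2) * t ^ 2) := fun t => by
    ring_nf
  have hint : IntegrableOn (fun t : ℝ => Real.exp (-t ^ 2 / 2) * aeval t (hermite m) *
      aeval t (hermite n)) (Set.Ioi s) := by
    refine (integrable_aeval_mul_exp_neg_mul_sq (hermite m * hermite n)
      one_half_pos).integrableOn.congr_fun (fun t _ => ?_) measurableSet_Ioi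
    simp only [map_mul, hweight]; ring
  have htend : Tendsto (fun u : ℝ => Real.exp (-u ^ 2 / 2) *
        (aeval u (derivative (hermite m)) * aeval u (hermite n)
          - aeval u (hermite m) * aeval u (derivative (hermite n)))) atTop (𝓝 0) := by
    refine (tendsto_aeval_mul_exp_neg_mul_sq
      (derivative (hermite m) * hermite n - hermite m * derivative (hermite n))
      one_half_pos).congr fun t => ?_
    rw [map_sub, map_mul, map_mul, hweight]; ring
  have hFTC := integral_Ioi_of_hasDerivAt_of_tendsto
    (hasDerivAt_exp_neg_sq_div_two_mul_wronskian_hermite m n s).continuousAt.continuousWithinAt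
    (fun t _ => hasDerivAt_exp_neg_sq_div_two_mul_wronskian_hermite m n t)
    (hint.const_mul ((n : ℝ) - m)) htend
  rw [integral_const_mul] at hFTC
  simp only [derivative_hermite, map_mul, map_natCast] at hFTC
  linear_combination -hFTC

/-- For `x ≠ y` and any real `s`:
`(x − y)·∫_s^∞ e^{−t²/2}·He_x(t)·He_y(t) dt
  = e^{−s²/2}·( x·He_{x−1}(s)·He_y(s) − y·He_x(s)·He_{y−1}(s) )`
(the terms with index `−1` being interpreted as `0`, which here is automatic since their
coefficients `x`, resp. `y`, vanish), and consequently the discrete Hermite kernel equals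
`K_s(x,y) = (2π·x!·y!)^{−1/2}·e^{−s²/2}·( x·He_{x−1}(s)·He_y(s) − y·He_x(s)·He_{y−1}(s) )/(x−y)`. -/
theorem discreteHermiteKernel_christoffelDarboux_lower
    (x y : ℕ) (hxy : x ≠ y) (s : ℝ) :
    ((x : ℝ) - (y : ℝ)) *
        ∫ t in Set.Ioi s, Real.exp (-t ^ 2 / 2) * Polynomial.aeval t (Polynomial.hermite x) *
            Polynomial.aeval t (Polynomial.hermite y)
      = Real.exp (-s ^ 2 / 2) *
          ((x : ℝ) * Polynomial.aeval s (Polynomial.hermite (x - 1)) *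
              Polynomial.aeval s (Polynomial.hermite y)
            - (y : ℝ) * Polynomial.aeval s (Polynomial.hermite x) *
                Polynomial.aeval s (Polynomial.hermite (y - 1)))
    ∧ discreteHermiteKernel s x y
      = (Real.sqrt (2 * Real.pi * (x ! : ℝ) * (y ! : ℝ)))⁻¹ * Real.exp (-s ^ 2 / 2) *
          ((x : ℝ) * Polynomial.aeval s (Polynomial.hermite (x - 1)) *
              Polynomial.aeval s (Polynomial.hermite y)
            - (y : ℝ) * Polynomial.aeval s (Polynomial.hermite x) *
                Polynomial.aeval s (Polynomial.hermite (y - 1)))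
          / ((x : ℝ) - (y : ℝ)) := by
  have hintegral := sub_mul_integral_Ioi_exp_neg_sq_div_two_mul_hermite_mul_hermite x y s
  refine ⟨hintegral, ?_⟩
  have hne : (x : ℝ) - y ≠ 0 := sub_ne_zero.mpr (Nat.cast_injective.ne hxy)
  rw [discreteHermiteKernel, eq_div_iff hne]
  linear_combination (Real.sqrt (2 * Real.pi * (x ! : ℝ) * (y ! : ℝ)))⁻¹ * hintegral

end
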